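/- seqPhragmén satisfies participation for unrepresented voters: for all profiles A, committee sizes k, and voters i ∈ N_A for which some W ∈ f(A,k) has W ∩ A_i = ∅, it is not the case that f(A_{-i},k) ≻_i f(A,k), where f is seqPhragmén. -/

import Mathlib

/-- An approval profile is a multiset of approval ballots (anonymous encoding):
each ballot is a nonempty subset of the candidates, and the electorate is nonempty. -/
def validProfile {C : Type*} [DecidableEq C] (A : Multiset (Finset C)) : Prop :=
  A ≠ 0 ∧ ∀ b ∈ A, b ≠ (∅ : Finset C)

/-- Kelly's extension, weak preference. -/
def KellyWeak {C : Type*} [DecidableEq C] (b : Finset C) (X Y : Set (Finset C)) : Prop :=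
  ∀ W ∈ X, ∀ W' ∈ Y, (W' ∩ b).card ≤ (W ∩ b).card

/-- Kelly's extension, strict preference. -/
def KellyStrict {C : Type*} [DecidableEq C] (b : Finset C) (X Y : Set (Finset C)) : Prop :=
  KellyWeak b X Y ∧ ∃ W ∈ X, ∃ W' ∈ Y, (W' ∩ b).card < (W ∩ b).card

/-- Phragmén load value `ℓ(c) = (1 + Σ_{i ∈ N_A(c)} y(i)) / |N_A(c)|`, where the load
function `y` is keyed by ballots (voters with equal ballots always carry equal loads). -/
def phragLoadVal {C : Type*} [DecidableEq C] (A : Multiset (Finset C))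
    (y : Finset C → ℚ) (c : C) : ℚ :=
  (1 + ((A.filter fun b => c ∈ b).map y).sum) /
    ((Multiset.card (A.filter fun b => c ∈ b) : ℚ))

/-- `phragValid A y E L`: starting from voter loads `y` and already elected candidates
`E`, the sequence `L` is a valid continuation of the seqPhragmén process: each elected
candidate is approved by some voter and minimizes the load value among unelected
candidates with nonempty support, and loads are updated accordingly. -/
def phragValid {C : Type*} [DecidableEq C] (A : Multiset (Finset C)) :
    (Finset C → ℚ) → Finset C → List C → Prop
  | _, _, [] => True
  | y, E, c :: rest =>
      c ∉ E ∧ (A.filter fun b => c ∈ b) ≠ 0 ∧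
      (∀ d : C, d ∉ E → (A.filter fun b => d ∈ b) ≠ 0 →
        phragLoadVal A y c ≤ phragLoadVal A y d) ∧
      phragValid A (fun b => if c ∈ b then phragLoadVal A y c else y b) (insert c E) rest

/-- The sequential Phragmén rule. -/
def seqPhragmen {C : Type*} [DecidableEq C] (A : Multiset (Finset C)) (k : ℕ) :
    Set (Finset C) :=
  {W | ∃ L : List C, L.toFinset = W ∧ L.length = k ∧ phragValid A (fun _ => 0) ∅ L}

/-!
Removing a voter `b` leaves the load value of every candidate outside `b` unchanged and strictly
raises that of every candidate in `b`, as long as `b` carries no load yet. Hence a seqPhragmén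
sequence avoiding `b` stays valid without `b`, so if `b` is unrepresented in some winning
committee, weak Kelly preference for abstaining forces every winning committee to avoid `b`.
In that situation the rule without `b` only elects committees that win with `b` as well: at each
step an `A`-minimizer can be assumed to lie outside `b` (otherwise completing the sequence would
produce a winner meeting `b`), so the candidate chosen without `b` is outside `b` and is an
`A`-minimizer too. Therefore abstaining gives `b` nothing.
-/

namespace SeqPhragmen

theorem sum_map_nonneg {α : Type*} {y : α → ℚ} (hy : 0 ≤ y) (s : Multiset α) :
    0 ≤ (s.map y).sum :=
  Multiset.sum_nonneg fun _ hx =>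
    let ⟨a, _, ha⟩ := Multiset.mem_map.1 hx
    ha ▸ hy a

variable {C : Type*} [DecidableEq C] {A : Multiset (Finset C)} {b : Finset C}
  {y : Finset C → ℚ} {E : Finset C} {c d : C}

/-- Unelected candidates approved by at least one voter. -/
def electable (A : Multiset (Finset C)) (E : Finset C) : Finset C :=
  A.toFinset.biUnion id \ E

def loadUpdate (A : Multiset (Finset C)) (y : Finset C → ℚ) (c : C) : Finset C → ℚ :=
  fun b => if c ∈ b then phragLoadVal A y c else y b

def IsPhragChoice (A : Multiset (Finset C)) (y : Finset C → ℚ) (E : Finset C) (c : C) : Prop :=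
  c ∈ electable A E ∧ ∀ d ∈ electable A E, phragLoadVal A y c ≤ phragLoadVal A y d

theorem mem_electable : d ∈ electable A E ↔ d ∉ E ∧ (A.filter fun b => d ∈ b) ≠ 0 := by
  simp [electable, Multiset.filter_eq_nil, and_comm]

theorem electable_insert : electable A (insert c E) = (electable A E).erase c :=
  Finset.sdiff_insert _ _ _

theorem electable_erase_subset : electable (A.erase b) E ⊆ electable A E :=
  Finset.sdiff_subset_sdiff
    (Finset.biUnion_subset_biUnion_of_subset_left _ fun _ h =>
      Multiset.mem_toFinset.2 (Multiset.mem_of_mem_erase (Multiset.mem_toFinset.1 h)))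
    le_rfl

theorem phragValid_cons_iff {L : List C} :
    phragValid A y E (c :: L) ↔
      IsPhragChoice A y E c ∧ phragValid A (loadUpdate A y c) (insert c E) L := by
  simp only [phragValid, IsPhragChoice, mem_electable, and_imp, and_assoc]
  exact Iff.rfl

theorem length_le_card_electable {L : List C} (hv : phragValid A y E L) :
    L.length ≤ (electable A E).card := by
  induction L generalizing y E with
  | nil => simp
  | cons c L ih =>
    obtain ⟨⟨hc, -⟩, hL⟩ := phragValid_cons_iff.1 hv
    have := ih hL
    rw [electable_insert, Finset.card_erase_of_mem hc] at this
    have := Finset.card_pos.2 ⟨c, hc⟩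
    simp only [List.length_cons]
    omega

theorem exists_isPhragChoice (h : (electable A E).Nonempty) : ∃ c, IsPhragChoice A y E c :=
  let ⟨c, hc, hmin⟩ := (electable A E).exists_min_image (phragLoadVal A y) h
  ⟨c, hc, hmin⟩

theorem exists_phragValid {r : ℕ} (h : r ≤ (electable A E).card) :
    ∃ L : List C, L.length = r ∧ phragValid A y E L := by
  induction r generalizing y E with
  | zero => exact ⟨[], rfl, trivial⟩
  | succ r ih =>
    obtain ⟨c, hc⟩ := exists_isPhragChoice (A := A) (y := y) (E := E)
      (Finset.card_pos.1 (by omega))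
    obtain ⟨L, hlen, hL⟩ := ih (y := loadUpdate A y c) (E := insert c E)
      (by rw [electable_insert, Finset.card_erase_of_mem hc.1]; omega)
    exact ⟨c :: L, by simp [hlen], phragValid_cons_iff.2 ⟨hc, hL⟩⟩

theorem phragLoadVal_nonneg (hy : 0 ≤ y) : 0 ≤ phragLoadVal A y c := by
  have := sum_map_nonneg hy (A.filter fun b => c ∈ b)
  unfold phragLoadVal
  positivity

theorem loadUpdate_nonneg (hy : 0 ≤ y) : 0 ≤ loadUpdate A y c := fun b => by
  unfold loadUpdate
  split_ifs
  exacts [phragLoadVal_nonneg hy, hy b]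

theorem loadUpdate_of_not_mem (hc : c ∉ b) : loadUpdate A y c b = y b :=
  if_neg hc

section Erase

variable (hb : b ∈ A)
include hb

theorem filter_erase_of_not_mem (hc : c ∉ b) :
    ((A.erase b).filter fun b' => c ∈ b') = A.filter fun b' => c ∈ b' := by
  conv_rhs =>
    rw [← Multiset.cons_erase hb, Multiset.filter_cons_of_neg (p := fun b' => c ∈ b') _ hc]

theorem filter_eq_cons_filter_erase_of_mem (hc : c ∈ b) :
    (A.filter fun b' => c ∈ b') = b ::ₘ (A.erase b).filter fun b' => c ∈ b' := by
  conv_lhs =>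
    rw [← Multiset.cons_erase hb, Multiset.filter_cons_of_pos (p := fun b' => c ∈ b') _ hc]

theorem phragLoadVal_erase_of_not_mem (hc : c ∉ b) :
    phragLoadVal (A.erase b) y c = phragLoadVal A y c := by
  simp only [phragLoadVal, filter_erase_of_not_mem hb hc]

theorem loadUpdate_erase_of_not_mem (hc : c ∉ b) :
    loadUpdate (A.erase b) y c = loadUpdate A y c := by
  unfold loadUpdate
  rw [phragLoadVal_erase_of_not_mem hb hc]

theorem phragLoadVal_lt_erase_of_mem (hy : 0 ≤ y) (hyb : y b = 0) (hc : c ∈ b)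
    (hne : ((A.erase b).filter fun b' => c ∈ b') ≠ 0) :
    phragLoadVal A y c < phragLoadVal (A.erase b) y c := by
  unfold phragLoadVal
  rw [filter_eq_cons_filter_erase_of_mem hb hc, Multiset.map_cons, Multiset.sum_cons, hyb,
    zero_add, Multiset.card_cons, Nat.cast_add, Nat.cast_one]
  have hsum := sum_map_nonneg hy ((A.erase b).filter fun b' => c ∈ b')
  have hcard : (0 : ℚ) < Multiset.card ((A.erase b).filter fun b' => c ∈ b') := by
    exact_mod_cast Multiset.card_pos.2 hne
  exact div_lt_div_of_pos_left (by linarith) hcard (by linarith)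

theorem IsPhragChoice.erase_of_not_mem (hy : 0 ≤ y) (hyb : y b = 0) (hc : c ∉ b)
    (h : IsPhragChoice A y E c) : IsPhragChoice (A.erase b) y E c := by
  refine ⟨?_, fun d hd => ?_⟩
  · rw [mem_electable, filter_erase_of_not_mem hb hc, ← mem_electable]
    exact h.1
  rw [phragLoadVal_erase_of_not_mem hb hc]
  by_cases hdb : d ∈ b
  · exact (h.2 d (electable_erase_subset hd)).trans
      (phragLoadVal_lt_erase_of_mem hb hy hyb hdb (mem_electable.1 hd).2).le
  · rw [phragLoadVal_erase_of_not_mem hb hdb]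
    exact h.2 d (electable_erase_subset hd)

theorem IsPhragChoice.of_erase (hy : 0 ≤ y) (hyb : y b = 0)
    (hc : IsPhragChoice (A.erase b) y E c) (hd : IsPhragChoice A y E d) (hdb : d ∉ b) :
    c ∉ b ∧ IsPhragChoice A y E c := by
  have hcd : phragLoadVal (A.erase b) y c ≤ phragLoadVal A y d := by
    rw [← phragLoadVal_erase_of_not_mem hb hdb]
    exact hc.2 d (by
      rw [mem_electable, filter_erase_of_not_mem hb hdb, ← mem_electable]; exact hd.1)
  have hdc := hd.2 c (electable_erase_subset hc.1)
  have hcb : c ∉ b := fun hcb =>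
    (phragLoadVal_lt_erase_of_mem hb hy hyb hcb (mem_electable.1 hc.1).2).not_ge
      (hcd.trans hdc)
  rw [phragLoadVal_erase_of_not_mem hb hcb] at hcd
  exact ⟨hcb, electable_erase_subset hc.1, fun e he => hcd.trans (hd.2 e he)⟩

theorem phragValid_erase_of_forall_not_mem {L : List C} (hy : 0 ≤ y) (hyb : y b = 0)
    (hL : ∀ c ∈ L, c ∉ b) (hv : phragValid A y E L) : phragValid (A.erase b) y E L := by
  induction L generalizing y E with
  | nil => trivial
  | cons c L ih =>
    obtain ⟨hc, hrest⟩ := phragValid_cons_iff.1 hv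
    have hcb := hL c List.mem_cons_self
    rw [← loadUpdate_erase_of_not_mem hb hcb] at hrest
    refine phragValid_cons_iff.2 ⟨hc.erase_of_not_mem hb hy hyb hcb, ?_⟩
    rw [loadUpdate_erase_of_not_mem hb hcb] at hrest ⊢
    exact ih (loadUpdate_nonneg hy) (by rwa [loadUpdate_of_not_mem hcb])
      (fun e he => hL e (List.mem_cons_of_mem _ he)) hrest

theorem phragValid_of_erase {L : List C} (hy : 0 ≤ y) (hyb : y b = 0)
    (havoid : ∀ L' : List C, L'.length = L.length → phragValid A y E L' →
      ∀ c ∈ L', c ∉ b)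
    (hv : phragValid (A.erase b) y E L) : phragValid A y E L := by
  induction L generalizing y E with
  | nil => trivial
  | cons c L ih =>
    have hlen : L.length + 1 ≤ (electable A E).card :=
      (length_le_card_electable hv).trans (Finset.card_le_card electable_erase_subset)
    obtain ⟨hc, hrest⟩ := phragValid_cons_iff.1 hv
    obtain ⟨d, hd⟩ := exists_isPhragChoice (y := y) ⟨c, electable_erase_subset hc.1⟩
    have hdb : d ∉ b := by
      obtain ⟨L', hL'len, hL'⟩ := exists_phragValid (y := loadUpdate A y d) (E := insert d E)
        (r := L.length)
        (by rw [electable_insert, Finset.card_erase_of_mem hd.1]; omega)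
      exact havoid (d :: L') (by simp [hL'len]) (phragValid_cons_iff.2 ⟨hd, hL'⟩) d
        List.mem_cons_self
    obtain ⟨hcb, hcA⟩ := hc.of_erase hb hy hyb hd hdb
    rw [loadUpdate_erase_of_not_mem hb hcb] at hrest
    refine phragValid_cons_iff.2 ⟨hcA, ih (loadUpdate_nonneg hy)
      (by rwa [loadUpdate_of_not_mem hcb]) (fun L' hL'len hL' e he => ?_) hrest⟩
    exact havoid (c :: L') (by simp [hL'len]) (phragValid_cons_iff.2 ⟨hcA, hL'⟩) e
      (List.mem_cons_of_mem _ he)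

theorem mem_seqPhragmen_erase_of_inter_eq_empty {k : ℕ} {W : Finset C}
    (hW : W ∈ seqPhragmen A k) (hWb : W ∩ b = ∅) : W ∈ seqPhragmen (A.erase b) k := by
  obtain ⟨L, rfl, hlen, hv⟩ := hW
  refine ⟨L, rfl, hlen,
    phragValid_erase_of_forall_not_mem hb le_rfl rfl (fun c hc hcb => ?_) hv⟩
  simpa [hWb] using Finset.mem_inter.2 ⟨List.mem_toFinset.2 hc, hcb⟩

theorem seqPhragmen_erase_subset {k : ℕ} (hall : ∀ W ∈ seqPhragmen A k, W ∩ b = ∅) :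
    seqPhragmen (A.erase b) k ⊆ seqPhragmen A k := by
  rintro _ ⟨L, rfl, hlen, hv⟩
  refine ⟨L, rfl, hlen, phragValid_of_erase hb le_rfl rfl (fun L' hL' hv' c hc hcb => ?_) hv⟩
  have := hall _ ⟨L', rfl, hL'.trans hlen, hv'⟩
  simpa [this] using Finset.mem_inter.2 ⟨List.mem_toFinset.2 hc, hcb⟩

end Erase

end SeqPhragmen

theorem seqPhragmen_participation_unrepresented_general
    {C : Type*} [DecidableEq C]
    (A : Multiset (Finset C))
    (k : ℕ)
    (b : Finset C) (hb : b ∈ A)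
    (hunrep : ∃ W ∈ seqPhragmen A k, W ∩ b = ∅) :
    ¬ KellyStrict b (seqPhragmen (A.erase b) k) (seqPhragmen A k) := by
  rintro ⟨hweak, W, hW, _, _, hlt⟩
  obtain ⟨W₀, hW₀, hW₀b⟩ := hunrep
  have hW₀' := SeqPhragmen.mem_seqPhragmen_erase_of_inter_eq_empty hb hW₀ hW₀b
  have hall : ∀ W' ∈ seqPhragmen A k, W' ∩ b = ∅ := fun W' hW' =>
    Finset.card_eq_zero.1 <| by simpa [hW₀b] using hweak W₀ hW₀' W' hW'
  rw [hall W (SeqPhragmen.seqPhragmen_erase_subset hb hall hW)] at hlt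
  exact Nat.not_lt_zero _ hlt

/-- seqPhragmén satisfies participation for unrepresented voters: a voter who approves
no candidate of some winning committee cannot strictly benefit from abstaining
(w.r.t. Kelly's extension). -/
theorem seqPhragmen_participation_unrepresented
    {C : Type*} [DecidableEq C] [Fintype C] (hm : 1 < Fintype.card C)
    (A : Multiset (Finset C)) (hA : validProfile A)
    (k : ℕ) (hk1 : 1 ≤ k) (hk2 : k < Fintype.card C)
    (b : Finset C) (hb : b ∈ A)
    (hunrep : ∃ W ∈ seqPhragmen A k, W ∩ b = ∅) :
    ¬ KellyStrict b (seqPhragmen (A.erase b) k) (seqPhragmen A k) :=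
  seqPhragmen_participation_unrepresented_general A k b hb hunrep
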